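/- arXiv:2008.01559 — 7 statements merged into one kernel-verified Lean document; each statement's English description precedes it below -/
import Mathlib

section
/- Under the Afriat inequalities (u_s - u_t - λ_t·α_tᵀ(β_s - β_t) ≤ 0 for all s,t with λ_t > 0), the constructed utility U(β) = min_t { u_t + λ_t·α_tᵀ(β - β_t) } rationalizes the data: for every n and every β with α_nᵀβ ≤ α_nᵀβ_n, we have U(β) ≤ U(β_n). -/
open Matrix

/-- Under the Afriat inequalities, the constructed utility rationalizes the
dataset: for every `n` and every `β` in the budget set
`{β : ⟨α n, β⟩ ≤ ⟨α n, βd n⟩}`, we have `U β ≤ U (βd n)`. -/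
theorem afriat_utility_rationalizes {m N : ℕ} (hN : 0 < N)
    (α βd : Fin N → (Fin m → ℝ))
    (hα : ∀ t i, 0 < α t i) (hβd : ∀ t i, 0 ≤ βd t i)
    (u lam : Fin N → ℝ)
    (hu : ∀ t, 0 < u t) (hlam : ∀ t, 0 < lam t)
    (hAfriat : ∀ s t, u s - u t - lam t * (α t ⬝ᵥ (βd s - βd t)) ≤ 0)
    (U : (Fin m → ℝ) → ℝ)
    (hU : ∀ β, U β = Finset.univ.inf'
      (Finset.univ_nonempty_iff.mpr (Fin.pos_iff_nonempty.mp hN))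
      (fun t => u t + lam t * (α t ⬝ᵥ (β - βd t)))) :
    ∀ (n : Fin N) (β : Fin m → ℝ), α n ⬝ᵥ β ≤ α n ⬝ᵥ βd n → U β ≤ U (βd n) := by
  intro n β hβ
  have h1 : U β ≤ u n := by
    rw [hU]
    refine le_trans (Finset.inf'_le _ (Finset.mem_univ n)) ?_
    have : α n ⬝ᵥ (β - βd n) ≤ 0 := by
      rw [dotProduct_sub]; linarith
    nlinarith [hlam n]
  have h2 : u n ≤ U (βd n) := by
    rw [hU]
    refine Finset.le_inf' _ _ (fun t _ => ?_)
    have := hAfriat n t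
    linarith
  linarith
end

section
/- If a dataset (α_n, β_n)_{n=1}^N is generated by maximizing a locally nonsatiated utility function U over the budget set { β : α_nᵀβ ≤ 1 } (with α_nᵀβ_n = 1), then the dataset satisfies the Generalized Axiom of Revealed Preference: for any cycle t_1, t_2, ..., t_k, if α_{t_i}ᵀβ_{t_{i+1}} ≤ α_{t_i}ᵀβ_{t_i} for all i < k, then α_{t_k}ᵀβ_{t_1} ≥ α_{t_k}ᵀβ_{t_k}. -/
open Matrix

/-- A dataset generated by maximizing a strictly increasing (hence locally
nonsatiated) utility over linear budget sets satisfies GARP: for any cycle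
`t 0, t 1, …, t (k-1)`, if `⟨α (t i), βd (t (i+1))⟩ ≤ ⟨α (t i), βd (t i)⟩`
for all `i < k - 1`, then `⟨α (t (k-1)), βd (t 0)⟩ ≥ ⟨α (t (k-1)), βd (t (k-1))⟩`. -/
theorem utility_maximization_implies_GARP {m N : ℕ}
    (α βd : Fin N → (Fin m → ℝ))
    (hα : ∀ n i, 0 < α n i) (hβd : ∀ n i, 0 ≤ βd n i)
    (hbudget : ∀ n, α n ⬝ᵥ βd n = 1)
    (U : (Fin m → ℝ) → ℝ)
    (hmono : ∀ x y : Fin m → ℝ, x ≤ y → x ≠ y → U x < U y)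
    (hmax : ∀ (n : Fin N) (β : Fin m → ℝ), (∀ i, 0 ≤ β i) →
      α n ⬝ᵥ β ≤ α n ⬝ᵥ βd n → U β ≤ U (βd n)) :
    ∀ (k : ℕ) (t : ℕ → Fin N), 0 < k →
      (∀ i, i < k - 1 → α (t i) ⬝ᵥ βd (t (i + 1)) ≤ α (t i) ⬝ᵥ βd (t i)) →
      α (t (k - 1)) ⬝ᵥ βd (t 0) ≥ α (t (k - 1)) ⬝ᵥ βd (t (k - 1)) := by
  intro k t hk hchain
  by_contra hlt
  push_neg at hlt
  have hm : 0 < m := by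
    rcases Nat.eq_zero_or_pos m with h | h
    · subst h
      have := hbudget (t 0)
      simp [dotProduct] at this
    · exact h
  -- strict revealed preference
  have hstrict : ∀ (n : Fin N) (β : Fin m → ℝ), (∀ i, 0 ≤ β i) →
      α n ⬝ᵥ β < α n ⬝ᵥ βd n → U β < U (βd n) := by
    intro n β hβ hlt'
    have hSpos : 0 < ∑ i, α n i :=
      Finset.sum_pos (fun i _ => hα n i)
        (Finset.univ_nonempty_iff.mpr (Fin.pos_iff_nonempty.mp hm))
    set ε := (α n ⬝ᵥ βd n - α n ⬝ᵥ β) / ∑ i, α n i with hε_def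
    have hε : 0 < ε := div_pos (by linarith) hSpos
    set β' : Fin m → ℝ := fun i => β i + ε with hβ'_def
    have hle : β ≤ β' := fun i => by simp [hβ'_def]; linarith
    have hne : β ≠ β' := by
      intro h
      have := congrFun h ⟨0, hm⟩
      simp [hβ'_def] at this
      linarith
    have h1 : U β < U β' := hmono _ _ hle hne
    have heq : α n ⬝ᵥ β' = α n ⬝ᵥ βd n := by
      have hsum : α n ⬝ᵥ β' = α n ⬝ᵥ β + (∑ i, α n i) * ε := by
        simp only [hβ'_def, dotProduct, mul_add, Finset.sum_add_distrib,
          Finset.sum_mul]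
      rw [hsum, hε_def, mul_div_cancel₀ _ (ne_of_gt hSpos)]
      ring
    have h3 : U β' ≤ U (βd n) :=
      hmax n β' (fun i => by have := hβ i; simp [hβ'_def]; linarith) (le_of_eq heq)
    linarith
  -- utility decreases along the chain
  have hU : ∀ j, j ≤ k - 1 → U (βd (t j)) ≤ U (βd (t 0)) := by
    intro j
    induction j with
    | zero => intro _; exact le_refl _
    | succ j ih =>
      intro hj
      have hj' : j < k - 1 := lt_of_lt_of_le (Nat.lt_succ_self j) hj
      have hw := hchain j hj'
      exact (hmax (t j) (βd (t (j + 1))) (hβd _) hw).trans (ih (le_of_lt hj'))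
  have h1 : U (βd (t (k - 1))) ≤ U (βd (t 0)) := hU (k - 1) le_rfl
  have h2 : U (βd (t 0)) < U (βd (t (k - 1))) :=
    hstrict (t (k - 1)) (βd (t 0)) (hβd _) hlt
  linarith
end

section
/- Existence of positive reals u_t, λ_t satisfying the Afriat inequalities implies GARP: for any sequence t_1,...,t_k with α_{t_i}ᵀ(β_{t_{i+1}} - β_{t_i}) ≤ 0 for i = 1,...,k-1, it holds that α_{t_k}ᵀ(β_{t_1} - β_{t_k}) ≥ 0. -/
open Matrix

/-- Feasibility of the Afriat inequalities implies GARP (cyclic consistency):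
for any sequence of indices `t 0, …, t (k-1)` with
`⟨α (t i), βd (t (i+1)) - βd (t i)⟩ ≤ 0` for `i = 0, …, k - 2`, it holds that
`⟨α (t (k-1)), βd (t 0) - βd (t (k-1))⟩ ≥ 0`. -/
theorem afriat_implies_GARP {m N : ℕ}
    (α βd : Fin N → (Fin m → ℝ)) (u lam : Fin N → ℝ)
    (hu : ∀ t, 0 < u t) (hlam : ∀ t, 0 < lam t)
    (hAfriat : ∀ s t, u s - u t - lam t * (α t ⬝ᵥ (βd s - βd t)) ≤ 0) :
    ∀ (k : ℕ) (t : ℕ → Fin N), 0 < k →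
      (∀ i, i < k - 1 → α (t i) ⬝ᵥ (βd (t (i + 1)) - βd (t i)) ≤ 0) →
      0 ≤ α (t (k - 1)) ⬝ᵥ (βd (t 0) - βd (t (k - 1))) := by
  intro k t hk hchain
  -- u is nonincreasing along the chain
  have hmono : ∀ i, i ≤ k - 1 → u (t i) ≤ u (t 0) := by
    intro i hi
    induction i with
    | zero => exact le_refl _
    | succ n ih =>
      have hn : n < k - 1 := Nat.lt_of_lt_of_le (Nat.lt_succ_self n) hi
      have h1 : u (t (n + 1)) ≤ u (t n) := by
        have hA := hAfriat (t (n + 1)) (t n)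
        have hc := hchain n hn
        nlinarith [hlam (t n), mul_nonpos_of_nonneg_of_nonpos (le_of_lt (hlam (t n))) hc]
      exact h1.trans (ih (Nat.le_of_lt hn))
  have hle : u (t (k - 1)) ≤ u (t 0) := hmono (k - 1) le_rfl
  have hA := hAfriat (t 0) (t (k - 1))
  have hl := hlam (t (k - 1))
  by_contra hcon
  push_neg at hcon
  nlinarith [mul_pos hl (neg_pos.mpr hcon)]
end

section
/- In the generalized (nonlinear-budget) Afriat setting: if there exist positive reals u_t, λ_t > 0 satisfying u_s - u_t - λ_t·g_t(β_s) ≤ 0 for all s,t (where g_t(β_t) = 0), then the function U(β) = min_t { u_t + λ_t·g_t(β) } satisfies U(β_n) = u_n for all n, and for every β with g_n(β) ≤ 0, U(β) ≤ U(β_n). -/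
/-- Nonlinear-budget Afriat construction: if positive reals `u t, λ t` satisfy
`u s - u t - λ t * g t (βd s) ≤ 0` for all `s, t` (with `g t (βd t) = 0`), then
`U(β) = min_t (u t + λ t * g t β)` satisfies `U (βd n) = u n` and rationalizes
the data: `g n β ≤ 0 → U β ≤ U (βd n)`. -/
theorem nonlinear_afriat_rationalizes {m N : ℕ} (hN : 0 < N)
    (g : Fin N → (Fin m → ℝ) → ℝ) (βd : Fin N → (Fin m → ℝ))
    (hg_cont : ∀ t, Continuous (g t)) (hg_mono : ∀ t, Monotone (g t))
    (hg_zero : ∀ t, g t (βd t) = 0)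
    (u lam : Fin N → ℝ) (hu : ∀ t, 0 < u t) (hlam : ∀ t, 0 < lam t)
    (hAfriat : ∀ s t, u s - u t - lam t * g t (βd s) ≤ 0)
    (U : (Fin m → ℝ) → ℝ)
    (hU : ∀ β, U β = Finset.univ.inf'
      (Finset.univ_nonempty_iff.mpr (Fin.pos_iff_nonempty.mp hN))
      (fun t => u t + lam t * g t β)) :
    (∀ n, U (βd n) = u n) ∧
      (∀ (n : Fin N) (β : Fin m → ℝ), g n β ≤ 0 → U β ≤ U (βd n)) := by
  have key : ∀ n, U (βd n) = u n := by
    intro n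
    rw [hU]
    apply le_antisymm
    · exact Finset.inf'_le_of_le _ (Finset.mem_univ n) (by rw [hg_zero]; simp)
    · apply Finset.le_inf'
      intro t _
      have := hAfriat n t
      linarith
  refine ⟨key, fun n β hβ => ?_⟩
  rw [key n, hU]
  exact Finset.inf'_le_of_le _ (Finset.mem_univ n) (by nlinarith [hlam n])
end

section
/- For scalar linear-Gaussian systems, the steady-state Kalman predicted variance Σ satisfying the Riccati fixed-point Σ = A²(Σ − Σ C² (C²Σ + R)⁻¹ Σ) + Q is strictly decreasing in the squared sensor gain C² (for Σ, Q, R, A² > 0): i.e., the map C² ↦ Σ(C²) defined implicitly by the fixed-point equation is monotone decreasing. -/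
/-!
Dividing the fixed-point equation by `Σ`, the positive fixed points for gain `c` are the roots of
`A² R / (c Σ + R) + Q / Σ = 1`. The left side is strictly decreasing both in `Σ` and in `c`.
Raising the gain from `c₁` to `c₂` therefore pushes its value at `Σ₁` below `1`, so the root
`Σ₂` for gain `c₂` lies to the left of `Σ₁`.
-/

open Set

/-- The Riccati map `S ↦ A² S R / (c S + R) + Q` divided by `S`. -/
noncomputable def riccatiRatio (A Q R c S : ℝ) : ℝ :=
  A ^ 2 * R / (c * S + R) + Q / S

section

variable {A Q R c S : ℝ}

theorem riccatiRatio_eq_one_of_fixed (hS : S ≠ 0) (hfix : S = A ^ 2 * S * R / (c * S + R) + Q) :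
    riccatiRatio A Q R c S = 1 := by
  have hsplit : A ^ 2 * S * R / (c * S + R) = S * (A ^ 2 * R / (c * S + R)) := by ring
  calc riccatiRatio A Q R c S = (S * (A ^ 2 * R / (c * S + R)) + Q) / S := by
        rw [riccatiRatio, add_div, mul_div_cancel_left₀ _ hS]
    _ = 1 := by rw [← hsplit, ← hfix, div_self hS]

theorem riccatiRatio_strictAntiOn_gain (hA : A ≠ 0) (hR : 0 < R) (hS : 0 < S) :
    StrictAntiOn (fun c ↦ riccatiRatio A Q R c S) (Ici 0) := by
  intro c₁ (hc₁ : 0 ≤ c₁) c₂ _ hc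
  have hA2 : 0 < A ^ 2 := sq_pos_of_ne_zero hA
  show riccatiRatio A Q R c₂ S < riccatiRatio A Q R c₁ S
  unfold riccatiRatio
  gcongr

theorem riccatiRatio_strictAntiOn (hA : A ≠ 0) (hQ : 0 ≤ Q) (hR : 0 < R) (hc : 0 < c) :
    StrictAntiOn (riccatiRatio A Q R c) (Ioi 0) := by
  intro S₁ (hS₁ : 0 < S₁) S₂ _ hS
  have hA2 : 0 < A ^ 2 := sq_pos_of_ne_zero hA
  unfold riccatiRatio
  apply add_lt_add_of_lt_of_le <;> gcongr

end

/-- The scalar steady-state Kalman predicted variance is strictly decreasing in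
the squared sensor gain: if `0 < c₁ < c₂` and `Σᵢ > 0` solves the Riccati
fixed point `Σ = A² Σ R / (cᵢ Σ + R) + Q`, then `Σ₂ < Σ₁`. -/
theorem riccati_fixed_point_decreasing_in_gain
    (A Q R c₁ c₂ S₁ S₂ : ℝ)
    (hA : A ≠ 0) (hQ : 0 < Q) (hR : 0 < R)
    (hc₁ : 0 < c₁) (hc : c₁ < c₂)
    (hS₁pos : 0 < S₁) (hS₂pos : 0 < S₂)
    (hfix₁ : S₁ = A ^ 2 * S₁ * R / (c₁ * S₁ + R) + Q)
    (hfix₂ : S₂ = A ^ 2 * S₂ * R / (c₂ * S₂ + R) + Q) :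
    S₂ < S₁ := by
  have hc₂ : 0 < c₂ := hc₁.trans hc
  have hgain : riccatiRatio A Q R c₂ S₁ < riccatiRatio A Q R c₁ S₁ :=
    riccatiRatio_strictAntiOn_gain hA hR hS₁pos (mem_Ici.2 hc₁.le) (mem_Ici.2 hc₂.le) hc
  refine ((riccatiRatio_strictAntiOn hA hQ.le hR hc₂).lt_iff_gt hS₁pos hS₂pos).1 ?_
  rwa [riccatiRatio_eq_one_of_fixed hS₁pos.ne' hfix₁,
    ← riccatiRatio_eq_one_of_fixed hS₂pos.ne' hfix₂] at hgain
end

section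
/- The scalar steady-state Riccati equation Σ = A² Σ R/(C² Σ + R) + Q has a unique positive solution when Q > 0, R > 0, C² > 0. -/
/-- The scalar steady-state Riccati equation `Σ = A² Σ R / (C² Σ + R) + Q` has a
unique positive solution when `Q > 0`, `R > 0` and `C² > 0`. -/
theorem riccati_fixed_point_exists_unique
    (A Q R C2 : ℝ) (hQ : 0 < Q) (hR : 0 < R) (hC2 : 0 < C2) :
    ∃! S : ℝ, 0 < S ∧ S = A ^ 2 * S * R / (C2 * S + R) + Q := by
  set b : ℝ := R - A ^ 2 * R - C2 * Q with hb
  have hD : (0:ℝ) < b ^ 2 + 4 * C2 * Q * R := by positivity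
  set s : ℝ := Real.sqrt (b ^ 2 + 4 * C2 * Q * R) with hsdef
  have hs : s ^ 2 = b ^ 2 + 4 * C2 * Q * R := Real.sq_sqrt hD.le
  have hsnn : 0 ≤ s := Real.sqrt_nonneg _
  set S : ℝ := (-b + s) / (2 * C2) with hSdef
  have h2 : 2 * C2 * S = -b + s := by
    rw [hSdef]; field_simp
  have hSpos : 0 < S := by
    have hbs : b < s := by nlinarith [mul_pos (mul_pos hC2 hQ) hR]
    apply div_pos (by linarith) (by linarith)
  have key : C2 * S ^ 2 + b * S - Q * R = 0 := by nlinarith [hs, h2, sq_nonneg (2*C2*S)]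
  have hden : (0:ℝ) < C2 * S + R := by positivity
  refine ⟨S, ⟨hSpos, ?_⟩, ?_⟩
  · rw [eq_comm, div_add' _ _ _ hden.ne', div_eq_iff hden.ne']
    linear_combination -key
  · rintro T ⟨hT, hTeq⟩
    have hdenT : (0:ℝ) < C2 * T + R := by positivity
    have keyT : C2 * T ^ 2 + b * T - Q * R = 0 := by
      rw [div_add' _ _ _ hdenT.ne', eq_div_iff hdenT.ne'] at hTeq
      linear_combination hTeq
    have hfac : (T - S) * (C2 * (T + S) + b) = 0 := by linear_combination keyT - key
    have hpos : 0 < C2 * (T + S) + b := by nlinarith [keyT, mul_pos hC2 hSpos]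
    have := mul_eq_zero.mp hfac
    rcases this with h | h
    · linarith
    · linarith
end

section
/- If the budget functions g_n are continuous and strictly increasing and the dataset satisfies generalized GARP (g_t(β_j) ≤ g_t(β_t) ⟹ g_j(β_t) ≥ 0 for all t, j), then for the two-observation case N = 2 there exist positive u_1, u_2, λ_1, λ_2 satisfying u_s − u_t − λ_t g_t(β_s) ≤ 0 for all s, t ∈ {1, 2}. -/
/-- Two-observation sufficiency of generalized GARP for the nonlinear-budget
Afriat inequalities: if `g₁, g₂` are continuous and strictly increasing with
`g t (β t) = 0`, and the dataset satisfies generalized GARP, then there exist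
positive `u₁, u₂, λ₁, λ₂` with `u_s − u_t − λ_t g_t(β_s) ≤ 0` for all
`s, t ∈ {1, 2}`. -/
theorem nonlinear_afriat_feasible_two_obs {m : ℕ}
    (g₁ g₂ : (Fin m → ℝ) → ℝ) (β₁ β₂ : Fin m → ℝ)
    (hcont₁ : Continuous g₁) (hcont₂ : Continuous g₂)
    (hmono₁ : StrictMono g₁) (hmono₂ : StrictMono g₂)
    (hβ₁ : ∀ i, 0 ≤ β₁ i) (hβ₂ : ∀ i, 0 ≤ β₂ i)
    (hz₁ : g₁ β₁ = 0) (hz₂ : g₂ β₂ = 0)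
    (hGARP₁ : g₁ β₂ ≤ 0 → 0 ≤ g₂ β₁)
    (hGARP₂ : g₂ β₁ ≤ 0 → 0 ≤ g₁ β₂) :
    ∃ u₁ u₂ l₁ l₂ : ℝ, 0 < u₁ ∧ 0 < u₂ ∧ 0 < l₁ ∧ 0 < l₂ ∧
      u₂ - u₁ - l₁ * g₁ β₂ ≤ 0 ∧
      u₁ - u₂ - l₂ * g₂ β₁ ≤ 0 ∧
      u₁ - u₁ - l₁ * g₁ β₁ ≤ 0 ∧
      u₂ - u₂ - l₂ * g₂ β₂ ≤ 0 := by
  set a := g₁ β₂ with ha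
  set b := g₂ β₁ with hb
  rw [hz₁, hz₂]
  rcases le_or_gt 0 a with hA | hA
  · rcases le_or_gt 0 b with hB | hB
    · exact ⟨1, 1, 1, 1, one_pos, one_pos, one_pos, one_pos, by linarith, by linarith,
        by linarith, by linarith⟩
    · have haz : 0 ≤ a := hGARP₂ hB.le
      have hA' : 0 < a := by
        rcases lt_or_eq_of_le haz with h | h
        · exact h
        · exfalso; have := hGARP₁ h.symm.le; linarith
      refine ⟨1, 2, 1 / a, 1 / (-b), one_pos, two_pos, div_pos one_pos hA',
        div_pos one_pos (by linarith), ?_, ?_, by linarith, by linarith⟩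
      · have h1 : (1 / a) * a = 1 := by field_simp
        linarith
      · have h2 : (1 / (-b)) * b = -1 := by
          rw [div_mul_eq_mul_div, one_mul, div_neg, div_self hB.ne]
        linarith
  · have hbz : 0 ≤ b := hGARP₁ hA.le
    have hB' : 0 < b := by
      rcases lt_or_eq_of_le hbz with h | h
      · exact h
      · exfalso; have := hGARP₂ h.symm.le; linarith
    refine ⟨2, 1, 1 / (-a), 1 / b, two_pos, one_pos, div_pos one_pos (by linarith),
      div_pos one_pos hB', ?_, ?_, by linarith, by linarith⟩
    · have h1 : (1 / (-a)) * a = -1 := by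
        rw [div_mul_eq_mul_div, one_mul, div_neg, div_self hA.ne]
      linarith
    · have h2 : (1 / b) * b = 1 := by field_simp
      linarith
end
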